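/- For any q = 2^m, each of the matrices B_b (b ∈ F_q ∪ {∞}) built from the (q+1,q)-net and the permuted Hadamard matrix is orthogonal (its columns form an orthonormal basis of R^{q²}), and for b ≠ c every pair of columns φ from B_b and ψ from B_c satisfies |⟨φ, ψ⟩| = 1/q; i.e., {B_b} is a set of q+1 mutually unbiased bases of R^{q²}. -/

import Mathlib

/-!
For finite `b`, the column `(j, v)` of `B_b` is supported on the line `w = b u + j` of `F × F`
and carries the Hadamard column `H̃_v` along it; for `b = ∞` it lives on the line `u = j`.
Two columns of the same basis lie on disjoint or equal lines, and on equal lines orthogonality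
of the Hadamard columns applies. Lines of different slopes meet in exactly one point, so there
the inner product is a single product of two `±1` entries divided by `q`.
-/

open Finset

section Hadamard

variable {κ ι : Type*} {H : κ → ι → ℝ}

lemma abs_hadamard_mul_hadamard (hent : ∀ u v, H u v = 1 ∨ H u v = -1) (u u' : κ) (v v' : ι) :
    |H u v * H u' v'| = 1 := by
  rcases hent u v with h | h <;> rcases hent u' v' with h' | h' <;> simp [h, h']

lemma sum_hadamard_mul_hadamard [Fintype κ] [DecidableEq ι]
    (hent : ∀ u v, H u v = 1 ∨ H u v = -1)
    (horth : ∀ v v', v ≠ v' → ∑ u, H u v * H u v' = 0) (v v' : ι) :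
    ∑ u, H u v * H u v' = if v = v' then (Fintype.card κ : ℝ) else 0 := by
  split_ifs with h
  · subst h
    have hsq (u : κ) : H u v * H u v = 1 := by
      rw [← abs_mul_abs_self, ← abs_mul, abs_hadamard_mul_hadamard hent]
    simp [hsq]
  · exact horth v v' h

end Hadamard

lemma mul_add_eq_mul_add_iff_eq_div {F : Type*} [Field F] {b b' : F} (hb : b ≠ b')
    (u c c' : F) : b' * u + c' = b * u + c ↔ u = (c' - c) / (b - b') := by
  rw [eq_div_iff (sub_ne_zero.mpr hb)]
  constructor <;> intro h <;> linear_combination -h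

section Net

variable {F : Type*} [Fintype F] [DecidableEq F]

/-- `netBasis H b (u, w) (j, v)` is the `(u, w)`-entry of the column `(B_b)_{j,v}`. -/
noncomputable def netBasis [Add F] [Mul F] (H : F → F → ℝ) : Option F → F × F → F × F → ℝ :=
  fun b p c =>
    match b with
    | some b => if p.2 = b * p.1 + c.1 then H p.1 c.2 / √(Fintype.card F) else 0
    | none => if p.1 = c.1 then H p.2 c.2 / √(Fintype.card F) else 0

omit [DecidableEq F] in
lemma div_sqrt_card_mul_div_sqrt_card (x y : ℝ) :
    x / √(Fintype.card F) * (y / √(Fintype.card F)) = x * y / Fintype.card F := by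
  rw [div_mul_div_comm, Real.mul_self_sqrt (Nat.cast_nonneg _)]

variable {H : F → F → ℝ}

lemma sum_netBasis_some_mul_some [Ring F] (b b' : F) (c c' : F × F) :
    ∑ p, netBasis H (some b) p c * netBasis H (some b') p c' =
      ∑ u, if b' * u + c'.1 = b * u + c.1 then H u c.2 * H u c'.2 / Fintype.card F else 0 := by
  simp only [netBasis, Fintype.sum_prod_type, ite_mul, mul_ite, zero_mul, mul_zero,
    sum_ite_eq', mem_univ, if_true, div_sqrt_card_mul_div_sqrt_card]

lemma sum_netBasis_none_mul_none [Ring F] (c c' : F × F) :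
    ∑ p, netBasis H none p c * netBasis H none p c' =
      if c.1 = c'.1 then ∑ w, H w c.2 * H w c'.2 / Fintype.card F else 0 := by
  simp only [netBasis, Fintype.sum_prod_type, ite_mul, mul_ite, zero_mul, mul_zero,
    sum_ite_eq', mem_univ, if_true, div_sqrt_card_mul_div_sqrt_card, sum_ite_irrel,
    sum_const_zero, @eq_comm _ c'.1]

lemma sum_netBasis_some_mul_none [Ring F] (b : F) (c c' : F × F) :
    ∑ p, netBasis H (some b) p c * netBasis H none p c' =
      H c'.1 c.2 * H (b * c'.1 + c.1) c'.2 / Fintype.card F := by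
  simp only [netBasis, Fintype.sum_prod_type_right, ite_mul, mul_ite, zero_mul, mul_zero,
    sum_ite_eq', mem_univ, if_true, div_sqrt_card_mul_div_sqrt_card]

variable (hent : ∀ u v, H u v = 1 ∨ H u v = -1)
include hent

lemma netBasis_orthonormal [Ring F] (horth : ∀ v v', v ≠ v' → ∑ u, H u v * H u v' = 0)
    (b : Option F) (c c' : F × F) :
    ∑ p, netBasis H b p c * netBasis H b p c' = if c = c' then 1 else 0 := by
  have hcard : (Fintype.card F : ℝ) ≠ 0 := Nat.cast_ne_zero.mpr Fintype.card_ne_zero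
  have hnone : ∑ p, netBasis H none p c * netBasis H none p c' = if c = c' then 1 else 0 := by
    rw [sum_netBasis_none_mul_none, ← sum_div, sum_hadamard_mul_hadamard hent horth]
    split_ifs <;> simp_all [Prod.ext_iff]
  cases b with
  | none => exact hnone
  | some b =>
    rw [← hnone, sum_netBasis_some_mul_some, sum_netBasis_none_mul_none]
    simp only [add_right_inj, sum_ite_irrel, sum_const_zero, @eq_comm _ c'.1]

lemma netBasis_unbiased [Field F] {b b' : Option F} (hbb : b ≠ b') (c c' : F × F) :
    |∑ p, netBasis H b p c * netBasis H b' p c'| = 1 / Fintype.card F := by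
  have habs (u u' v v' : F) : |H u v * H u' v' / Fintype.card F| = 1 / Fintype.card F := by
    rw [abs_div, abs_hadamard_mul_hadamard hent, Nat.abs_cast]
  match b, b' with
  | some b, some b' =>
    have hb : b ≠ b' := fun h => hbb (congrArg some h)
    simp only [sum_netBasis_some_mul_some, mul_add_eq_mul_add_iff_eq_div hb, sum_ite_eq',
      mem_univ, if_true, habs]
  | some b, none => rw [sum_netBasis_some_mul_none, habs]
  | none, some b' =>
    simp only [mul_comm (netBasis H none _ c), sum_netBasis_some_mul_none, habs]
  | none, none => exact absurd rfl hbb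

end Net

theorem mub_construction
    (F : Type) [Field F] [Fintype F] [DecidableEq F]
    (Ht : F → F → ℝ)
    (hent : ∀ u v : F, Ht u v = 1 ∨ Ht u v = -1)
    (horth : ∀ v v' : F, v ≠ v' → ∑ u : F, Ht u v * Ht u v' = 0) :
    let q : ℝ := Fintype.card F
    let B : Option F → (F × F) → (F × F) → ℝ := fun b p c =>
      match b with
      | some b => if p.2 = b * p.1 + c.1 then Ht p.1 c.2 / Real.sqrt q else 0
      | none => if p.1 = c.1 then Ht p.2 c.2 / Real.sqrt q else 0
    (∀ b : Option F, ∀ c c' : F × F,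
      (∑ p : F × F, B b p c * B b p c') = if c = c' then 1 else 0) ∧
    (∀ b b' : Option F, b ≠ b' → ∀ c c' : F × F,
      |∑ p : F × F, B b p c * B b' p c'| = 1 / q) :=
  ⟨netBasis_orthonormal hent horth, fun _ _ hbb => netBasis_unbiased hent hbb⟩
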